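/- For every n ≥ 1, every bounded subset of ℝⁿ equipped with the ℓ∞ (supremum) norm distance d(x,y) = max_{1≤i≤n} |x_i − y_i| admits an isometric embedding into the Gromov–Hausdorff space M. -/

import Mathlib

/-!
Send `x` to a finite space made of `n` pairs of points: the two points of the `i`-th pair are at
distance `gap i = cᵢ + 2 xᵢ`, points of different pairs at a large distance `sep`. The upper
bound `d_GH ≤ maxᵢ |xᵢ - yᵢ|` comes from the obvious correspondence. For the lower bound, a
correspondence of distortion `2 d_GH` sends the `i`-th pair to two points whose distance, which
is `0`, `sep` or some gap, differs from `gap i` by at most `2 d_GH`; when the centres `cᵢ` are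
spread far enough apart, each of these differences is at least `2 |xᵢ - yᵢ|`.
-/

open GromovHausdorff Metric Set

theorem GromovHausdorff.exists_abs_dist_sub_dist_le_two_ghDist (X : Type*) [MetricSpace X]
    [CompactSpace X] [Nonempty X] (Y : Type*) [MetricSpace Y] [CompactSpace Y] [Nonempty Y]
    (p p' : X) : ∃ q q' : Y, |dist q q' - dist p p'| ≤ 2 * ghDist X Y := by
  obtain ⟨Φ, Ψ, hΦ, hΨ, hgh⟩ := ghDist_eq_hausdorffDist X Y
  have hΨc : IsCompact (range Ψ) := isCompact_range hΨ.continuous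
  have near : ∀ p, ∃ q, dist (Ψ q) (Φ p) ≤ ghDist X Y := fun p ↦ by
    obtain ⟨_, ⟨q, rfl⟩, hq⟩ := hΨc.exists_infDist_eq_dist (range_nonempty Ψ) (Φ p)
    refine ⟨q, dist_comm (Ψ q) (Φ p) ▸ hq ▸ hgh ▸ infDist_le_hausdorffDist_of_mem
      (mem_range_self p) ?_⟩
    exact hausdorffEDist_ne_top_of_nonempty_of_bounded (range_nonempty Φ) (range_nonempty Ψ)
      (isCompact_range hΦ.continuous).isBounded hΨc.isBounded
  obtain ⟨q, hq⟩ := near p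
  obtain ⟨q', hq'⟩ := near p'
  refine ⟨q, q', ?_⟩
  calc |dist q q' - dist p p'| = dist (dist (Ψ q) (Ψ q')) (dist (Φ p) (Φ p')) := by
        rw [hΨ.dist_eq, hΦ.dist_eq, Real.dist_eq]
    _ ≤ dist (Ψ q) (Φ p) + dist (Ψ q') (Φ p') := dist_dist_dist_le _ _ _ _
    _ ≤ 2 * ghDist X Y := by linarith

/-- The points `⟨i, false⟩` and `⟨i, true⟩` are at distance `gap i`, points with different
indices at distance `sep`. -/
structure Dumbbells (ι : Type*) where
  gap : ι → ℝ
  sep : ℝ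
  gap_pos : ∀ i, 0 < gap i
  gap_le_sep : ∀ i, gap i ≤ sep

namespace Dumbbells

variable {ι : Type*}

structure Point (_X : Dumbbells ι) where
  idx : ι
  side : Bool

variable [DecidableEq ι] (X : Dumbbells ι)

instance : MetricSpace X.Point where
  dist p q := if p.idx = q.idx then if p.side = q.side then 0 else X.gap p.idx else X.sep
  dist_self p := by simp
  dist_comm := by
    rintro ⟨i, u⟩ ⟨j, v⟩
    simp only [eq_comm (a := j), eq_comm (a := v)]
    split_ifs <;> simp_all
  dist_triangle := by
    rintro ⟨i, u⟩ ⟨j, v⟩ ⟨k, w⟩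
    have := X.gap_pos i; have := X.gap_pos j; have := X.gap_le_sep i; have := X.gap_le_sep j
    dsimp only
    split_ifs <;> simp_all <;> linarith
  eq_of_dist_eq_zero := by
    rintro ⟨i, u⟩ ⟨j, v⟩ h
    have := X.gap_pos i
    have := X.gap_le_sep i
    dsimp only at h
    split_ifs at h with hij huv
    · rw [hij, huv]
    · linarith
    · linarith

theorem dist_mk (i j : ι) (u v : Bool) :
    dist (⟨i, u⟩ : X.Point) ⟨j, v⟩ =
      if i = j then if u = v then 0 else X.gap i else X.sep :=
  rfl

instance [Finite ι] : Finite X.Point :=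
  .of_injective (fun p ↦ (p.idx, p.side)) fun ⟨_, _⟩ ⟨_, _⟩ h ↦ by cases h; rfl

instance [Nonempty ι] : Nonempty X.Point := ⟨⟨Classical.arbitrary ι, false⟩⟩

variable [Fintype ι] [Nonempty ι] (Y : Dumbbells ι)

theorem ghDist_le (hXY : X.sep = Y.sep) : ghDist X.Point Y.Point ≤ dist X.gap Y.gap / 2 := by
  have := ghDist_le_of_approx_subsets (X := X.Point) (Y := Y.Point) (s := univ)
    (fun p ↦ (⟨p.1.idx, p.1.side⟩ : Y.Point)) (ε₁ := 0) (ε₂ := dist X.gap Y.gap) (ε₃ := 0)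
    (fun p ↦ ⟨p, mem_univ p, (dist_self p).le⟩)
    (fun q ↦ ⟨⟨⟨q.idx, q.side⟩, mem_univ _⟩, (dist_self _).le⟩) <| by
      rintro ⟨⟨i, u⟩, -⟩ ⟨⟨j, v⟩, -⟩
      simp only [Subtype.dist_eq, dist_mk]
      split_ifs
      · simp [dist_nonneg]
      · exact dist_le_pi_dist X.gap Y.gap i
      · simp [hXY, dist_nonneg]
  linarith

theorem abs_gap_sub_le_two_ghDist (i : ι) (h₀ : |X.gap i - Y.gap i| ≤ X.gap i)
    (hsep : |X.gap i - Y.gap i| ≤ Y.sep - X.gap i)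
    (hne : ∀ j ≠ i, |X.gap i - Y.gap i| ≤ |X.gap i - Y.gap j|) :
    |X.gap i - Y.gap i| ≤ 2 * ghDist X.Point Y.Point := by
  obtain ⟨⟨j, u⟩, ⟨k, v⟩, hq⟩ := exists_abs_dist_sub_dist_le_two_ghDist X.Point Y.Point
    ⟨i, false⟩ ⟨i, true⟩
  refine le_trans ?_ hq
  rw [dist_mk, dist_mk]
  simp only [Bool.false_eq_true, if_false, if_true]
  split_ifs with hjk
  · simpa [abs_of_pos (X.gap_pos i)] using h₀
  · rcases eq_or_ne j i with rfl | hji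
    · exact (abs_sub_comm _ _).le
    · exact (hne j hji).trans_eq (abs_sub_comm _ _)
  · exact hsep.trans (le_abs_self _)

theorem ghDist_eq (hXY : X.sep = Y.sep) (h₀ : ∀ i, |X.gap i - Y.gap i| ≤ X.gap i)
    (hsep : ∀ i, |X.gap i - Y.gap i| ≤ Y.sep - X.gap i)
    (hne : ∀ i, ∀ j ≠ i, |X.gap i - Y.gap i| ≤ |X.gap i - Y.gap j|) :
    ghDist X.Point Y.Point = dist X.gap Y.gap / 2 := by
  refine le_antisymm (ghDist_le X Y hXY) ?_
  have : 0 ≤ ghDist X.Point Y.Point := dist_nonneg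
  rw [div_le_iff₀ two_pos, mul_comm, dist_pi_le_iff (by positivity)]
  intro i
  rw [Real.dist_eq]
  linarith [abs_gap_sub_le_two_ghDist X Y i (h₀ i) (hsep i) (hne i)]

end Dumbbells

section Embedding

variable {n : ℕ} {B : ℝ} {x y : Fin n → ℝ}

theorem abs_apply_le_of_mem_closedBall_zero (hx : x ∈ closedBall 0 B) (i : Fin n) : |x i| ≤ B :=
  (norm_le_pi_norm x i).trans (mem_closedBall_zero_iff.1 hx)

/-- The centres `(8B + 1)(i + 1)` are spaced so that, for `|xᵢ| ≤ B`, the gaps stay at least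
`4B` away from each other, from `0` and from `sep = (8B + 1)(n + 1)`. -/
def ballGap (B : ℝ) (x : Fin n → ℝ) (i : Fin n) : ℝ := (8 * B + 1) * (i + 1) + 2 * x i

theorem ballGap_sub_ballGap (B : ℝ) (x y : Fin n → ℝ) :
    ballGap B x - ballGap B y = (2 : ℝ) • (x - y) := by
  ext i
  simp only [ballGap, Pi.sub_apply, Pi.smul_apply, smul_eq_mul]
  ring

theorem abs_ballGap_sub_le (hx : x ∈ closedBall 0 B) (hy : y ∈ closedBall 0 B) (i : Fin n) :
    |ballGap B x i - ballGap B y i| ≤ 4 * B := by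
  have hxi := abs_le.1 (abs_apply_le_of_mem_closedBall_zero hx i)
  have hyi := abs_le.1 (abs_apply_le_of_mem_closedBall_zero hy i)
  rw [abs_le]
  constructor <;> simp only [ballGap] <;> linarith [hxi.1, hxi.2, hyi.1, hyi.2]

theorem ballGap_bounds (hx : x ∈ closedBall 0 B) (i : Fin n) :
    6 * B + 1 ≤ ballGap B x i ∧ ballGap B x i + (6 * B + 1) ≤ (8 * B + 1) * (n + 1) := by
  have hxi := abs_le.1 (abs_apply_le_of_mem_closedBall_zero hx i)
  have hB : 0 ≤ B := nonempty_closedBall.1 ⟨_, hx⟩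
  have hi : (i : ℝ) + 1 ≤ n := by exact_mod_cast i.isLt
  have hi0 : (0 : ℝ) ≤ i := Nat.cast_nonneg _
  constructor <;> simp only [ballGap] <;> nlinarith

theorem four_mul_le_abs_ballGap_sub (hx : x ∈ closedBall 0 B) (hy : y ∈ closedBall 0 B)
    {i j : Fin n} (hji : j ≠ i) : 4 * B ≤ |ballGap B x i - ballGap B y j| := by
  have hxi := abs_le.1 (abs_apply_le_of_mem_closedBall_zero hx i)
  have hyj := abs_le.1 (abs_apply_le_of_mem_closedBall_zero hy j)
  have hB : 0 ≤ B := nonempty_closedBall.1 ⟨_, hx⟩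
  have hij : (1 : ℝ) ≤ |(i : ℝ) - j| := by
    have : ((i : ℤ) - j) ≠ 0 := sub_ne_zero.2 (by exact_mod_cast Fin.val_ne_of_ne hji.symm)
    exact_mod_cast Int.one_le_abs this
  rcases le_abs'.1 hij with h | h
  · refine le_trans ?_ (neg_le_abs _)
    simp only [ballGap]; nlinarith
  · refine le_trans ?_ (le_abs_self _)
    simp only [ballGap]; nlinarith

def ballDumbbells (B : ℝ) (x : closedBall (0 : Fin n → ℝ) B) : Dumbbells (Fin n) where
  gap := ballGap B x
  sep := (8 * B + 1) * (n + 1)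
  gap_pos i := by
    have hB : 0 ≤ B := nonempty_closedBall.1 ⟨_, x.2⟩
    linarith [(ballGap_bounds x.2 i).1]
  gap_le_sep i := by
    have hB : 0 ≤ B := nonempty_closedBall.1 ⟨_, x.2⟩
    linarith [(ballGap_bounds x.2 i).2]

theorem isometry_toGHSpace_ballDumbbells [Nonempty (Fin n)] (B : ℝ) :
    Isometry fun x : closedBall (0 : Fin n → ℝ) B ↦ toGHSpace (ballDumbbells B x).Point := by
  refine Isometry.of_dist_eq fun x y ↦ ?_
  have hB : 0 ≤ B := nonempty_closedBall.1 ⟨_, x.2⟩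
  change ghDist _ _ = _
  rw [Dumbbells.ghDist_eq (ballDumbbells B x) (ballDumbbells B y) rfl]
  all_goals simp only [ballDumbbells]
  · rw [dist_eq_norm, ballGap_sub_ballGap, norm_smul, Real.norm_two, Subtype.dist_eq,
      dist_eq_norm]
    ring
  · intro i
    linarith [abs_ballGap_sub_le x.2 y.2 i, (ballGap_bounds x.2 i).1]
  · intro i
    linarith [abs_ballGap_sub_le x.2 y.2 i, (ballGap_bounds x.2 i).2]
  · intro i j hji
    exact (abs_ballGap_sub_le x.2 y.2 i).trans (four_mul_le_abs_ballGap_sub x.2 y.2 hji)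

end Embedding

theorem bounded_subset_linfty_Rn_embeds (n : ℕ) (hn : 1 ≤ n)
    (s : Set (Fin n → ℝ)) (hs : Bornology.IsBounded s) :
    ∃ f : s → GHSpace, Isometry f := by
  have : Nonempty (Fin n) := Fin.pos_iff_nonempty.1 hn
  obtain ⟨B, hB⟩ := hs.subset_closedBall 0
  exact ⟨_, (isometry_toGHSpace_ballDumbbells B).comp
    (Isometry.of_dist_eq fun _ _ ↦ rfl : Isometry (inclusion hB))⟩
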